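/- arXiv:2410.10695 — 2 statements merged into one kernel-verified Lean document; each statement's English description precedes it below -/
import Mathlib

section
/- Let A be an n×n real symmetric matrix, Y a diagonal matrix with entries in [0,1], and z, w complex numbers with positive imaginary part. Then the scalar f(z,w) = ⟨(A - zY - w(I-Y))^{-1} e_1, e_1⟩ has nonnegative imaginary part. -/
open Matrix Complex

/-- For a real symmetric `A`, diagonal `Y` with entries in `[0,1]`, and `z, w` in the
upper half-plane, the scalar `⟨(A - zY - w(I-Y))⁻¹ e₁, e₁⟩` (the `(1,1)` entry of the
inverse) has nonnegative imaginary part. -/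
theorem stmt_2 (n : ℕ) (A : Matrix (Fin (n + 1)) (Fin (n + 1)) ℝ) (hA : A.IsSymm)
    (t : Fin (n + 1) → ℝ) (ht : ∀ i, t i ∈ Set.Icc (0 : ℝ) 1)
    (z w : ℂ) (hz : 0 < z.im) (hw : 0 < w.im)
    (Y M : Matrix (Fin (n + 1)) (Fin (n + 1)) ℂ)
    (hY : Y = Matrix.diagonal (fun i => (t i : ℂ)))
    (hM : M = A.map Complex.ofReal - (z • Y + w • ((1 : Matrix (Fin (n + 1)) (Fin (n + 1)) ℂ) - Y))) :
    0 ≤ ((M⁻¹) 0 0).im := by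
  by_cases hdet : IsUnit M.det
  · set u : Fin (n+1) → ℂ := M⁻¹.mulVec (Pi.single 0 1) with hu
    have hMu : M.mulVec u = Pi.single 0 1 := by
      rw [hu, Matrix.mulVec_mulVec, Matrix.mul_nonsing_inv M hdet, Matrix.one_mulVec]
    have hentry : (M⁻¹) 0 0 = u 0 := by
      simp [hu, Matrix.mulVec_single]
    -- the quadratic form
    have hS : star u ⬝ᵥ M.mulVec u = starRingEnd ℂ (u 0) := by
      rw [hMu]
      simp [dotProduct, Pi.single_apply, Finset.sum_ite_eq]
    -- decompose
    have h1Y : (1 : Matrix (Fin (n+1)) (Fin (n+1)) ℂ) - Y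
        = Matrix.diagonal (fun i => ((1 - t i : ℝ) : ℂ)) := by
      rw [hY, ← Matrix.diagonal_one, Matrix.diagonal_sub]
      funext i; push_cast; ring
    -- the pieces
    set α : ℂ := star u ⬝ᵥ (A.map Complex.ofReal).mulVec u with hα
    set β : ℂ := star u ⬝ᵥ Y.mulVec u with hβ
    set γ : ℂ := star u ⬝ᵥ ((1 : Matrix (Fin (n+1)) (Fin (n+1)) ℂ) - Y).mulVec u with hγ
    have hdecomp : star u ⬝ᵥ M.mulVec u = α - (z * β + w * γ) := by
      rw [hM, Matrix.sub_mulVec, Matrix.add_mulVec, Matrix.smul_mulVec,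
        Matrix.smul_mulVec, dotProduct_sub, dotProduct_add,
        dotProduct_smul, dotProduct_smul]
      simp [hα, hβ, hγ, smul_eq_mul]
    -- α is real
    have hαre : α.im = 0 := by
      have : starRingEnd ℂ α = α := by
        rw [hα]
        simp only [dotProduct, Matrix.mulVec, dotProduct, map_sum, _root_.map_mul,
          Matrix.map_apply, Complex.conj_ofReal, Pi.star_apply, RingHomCompTriple.comp_apply,
          Complex.conj_conj, RCLike.star_def]
        simp only [RingHom.id_apply]
        simp only [Finset.mul_sum]
        rw [Finset.sum_comm]
        apply Finset.sum_congr rfl; intro i _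
        apply Finset.sum_congr rfl; intro j _
        have hAij : A j i = A i j := by
          conv_lhs => rw [← hA]
          rfl
        rw [hAij]; ring
      exact Complex.conj_eq_iff_im.mp this
    -- β and γ are real nonneg
    have hβval : β = ((∑ i, t i * Complex.normSq (u i) : ℝ) : ℂ) := by
      rw [hβ, hY]
      simp only [dotProduct, Matrix.mulVec_diagonal, Pi.star_apply, RCLike.star_def]
      push_cast
      apply Finset.sum_congr rfl; intro i _
      rw [Complex.normSq_eq_conj_mul_self]; ring
    have hγval : γ = ((∑ i, (1 - t i) * Complex.normSq (u i) : ℝ) : ℂ) := by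
      rw [hγ, h1Y]
      simp only [dotProduct, Matrix.mulVec_diagonal, Pi.star_apply, RCLike.star_def]
      push_cast
      apply Finset.sum_congr rfl; intro i _
      rw [Complex.normSq_eq_conj_mul_self]; ring
    have hβre : 0 ≤ β.re := by
      rw [hβval]; simp only [Complex.ofReal_re]
      exact Finset.sum_nonneg fun i _ => mul_nonneg (ht i).1 (Complex.normSq_nonneg _)
    have hγre : 0 ≤ γ.re := by
      rw [hγval]; simp only [Complex.ofReal_re]
      exact Finset.sum_nonneg fun i _ =>
        mul_nonneg (by linarith [(ht i).2]) (Complex.normSq_nonneg _)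
    have hβim : β.im = 0 := by rw [hβval]; simp
    have hγim : γ.im = 0 := by rw [hγval]; simp
    -- conclude
    have hkey : (starRingEnd ℂ (u 0)).im ≤ 0 := by
      rw [← hS, hdecomp]
      simp only [Complex.sub_im, Complex.add_im, Complex.mul_im, hαre, hβim, hγim,
        mul_zero, add_zero]
      nlinarith [mul_nonneg hz.le hβre, mul_nonneg hw.le hγre]
    rw [hentry]
    have := Complex.conj_im (u 0)
    simp only [Complex.conj_im] at hkey ⊢
    linarith [hkey]
  · rw [Matrix.nonsing_inv_apply_not_isUnit M hdet]
    simp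
end

section
/- Let a ∈ ℂ, let A = [[−a, A₁₂],[A₁₂ᵀ, A₂₂]] and B = [[−a, B₁₂],[B₁₂ᵀ, B₂₂]] be Hermitian block matrices with A₂₂ and B₂₂ invertible, and form the star-product matrix C = [[−a, A₁₂, B₁₂],[A₁₂ᵀ, A₂₂, 0],[B₁₂ᵀ, 0, B₂₂]]. Set g_A = −a − A₁₂ A₂₂^{-1} A₁₂ᵀ, g_B = −a − B₁₂ B₂₂^{-1} B₁₂ᵀ (as scalars), and assume g_A + g_B + a ≠ 0. Then the (1,1) entry of C^{-1} equals (g_A + g_B + a)^{-1}; equivalently, 1/(C^{-1})_{11} = 1/(A^{-1})_{11} + 1/(B^{-1})_{11} + a whenever A, B, C are invertible and the relevant (1,1) entries are nonzero. -/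
/-!
The `(1,1)` entry of the inverse of a bordered matrix `[[x, R], [L, D]]` with `D` invertible is
the inverse of the scalar Schur complement `x - R D⁻¹ L` (with `0⁻¹ = 0` this holds even when the
matrix is singular). For `C` the lower-right block is block diagonal, so its Schur complement
splits as `-a - A₁₂ A₂₂⁻¹ A₁₂ᵀ - B₁₂ B₂₂⁻¹ B₁₂ᵀ = g_A + g_B + a`, while those of `A` and `B` are
`g_A` and `g_B`.
-/

namespace Matrix

variable {α K : Type*} [CommRing α] [Field K] {m n p : Type*} [Fintype m] [DecidableEq m]
  [Fintype n] [DecidableEq n]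

theorem toBlocks₁₁_inv_fromBlocks_of_isUnit₂₂ (A : Matrix m m α) (B : Matrix m n α)
    (C : Matrix n m α) {D : Matrix n n α} (hD : IsUnit D) :
    (fromBlocks A B C D)⁻¹.toBlocks₁₁ = (A - B * D⁻¹ * C)⁻¹ := by
  cases hD.nonempty_invertible
  rw [← invOf_eq_nonsing_inv D]
  by_cases hS : IsUnit (A - B * ⅟D * C)
  · cases hS.nonempty_invertible
    let := fromBlocks₂₂Invertible A B C D
    rw [← invOf_eq_nonsing_inv, ← invOf_eq_nonsing_inv, invOf_fromBlocks₂₂_eq,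
      toBlocks_fromBlocks₁₁]
  · -- both sides are the junk value `0`
    have hM : ¬IsUnit (fromBlocks A B C D) := isUnit_fromBlocks_iff_of_invertible₂₂.not.mpr hS
    rw [isUnit_iff_isUnit_det] at hS hM
    rw [nonsing_inv_apply_not_isUnit _ hM, nonsing_inv_apply_not_isUnit _ hS]
    rfl

theorem inv_fromBlocks_apply_inl_inl_of_isUnit₂₂ (x : K) (R : Matrix (Fin 1) n K)
    (L : Matrix n (Fin 1) K) {D : Matrix n n K} (hD : IsUnit D) :
    (fromBlocks (of fun _ _ => x) R L D)⁻¹ (.inl 0) (.inl 0) = (x - (R * D⁻¹ * L) 0 0)⁻¹ := by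
  change (fromBlocks _ R L D)⁻¹.toBlocks₁₁ 0 0 = _
  rw [toBlocks₁₁_inv_fromBlocks_of_isUnit₂₂ _ _ _ hD, inv_subsingleton, diagonal_apply_eq,
    Ring.inverse_eq_inv]
  rfl

theorem fromCols_mul_inv_fromBlocks_diagonal_mul_fromRows (R₁ : Matrix p m α)
    (R₂ : Matrix p n α) (L₁ : Matrix m p α) (L₂ : Matrix n p α) {D₁ : Matrix m m α}
    {D₂ : Matrix n n α} (hD₁ : IsUnit D₁) (hD₂ : IsUnit D₂) :
    fromCols R₁ R₂ * (fromBlocks D₁ 0 0 D₂)⁻¹ * fromRows L₁ L₂ =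
      R₁ * D₁⁻¹ * L₁ + R₂ * D₂⁻¹ * L₂ := by
  rw [inv_fromBlocks_zero₂₁_of_isUnit_iff _ _ _ (iff_of_true hD₁ hD₂), fromCols_mul_fromBlocks,
    fromCols_mul_fromRows]
  simp

end Matrix

open Matrix

theorem stmt_6_general (m k : ℕ) (a : ℂ)
    (A12 : Matrix (Fin 1) (Fin m) ℂ) (A22 : Matrix (Fin m) (Fin m) ℂ) (hA22 : IsUnit A22)
    (B12 : Matrix (Fin 1) (Fin k) ℂ) (B22 : Matrix (Fin k) (Fin k) ℂ) (hB22 : IsUnit B22)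
    (A : Matrix (Fin 1 ⊕ Fin m) (Fin 1 ⊕ Fin m) ℂ)
    (hAdef : A = Matrix.fromBlocks (Matrix.of fun _ _ => -a) A12 A12.transpose A22)
    (B : Matrix (Fin 1 ⊕ Fin k) (Fin 1 ⊕ Fin k) ℂ)
    (hBdef : B = Matrix.fromBlocks (Matrix.of fun _ _ => -a) B12 B12.transpose B22)
    (C : Matrix (Fin 1 ⊕ (Fin m ⊕ Fin k)) (Fin 1 ⊕ (Fin m ⊕ Fin k)) ℂ)
    (hCdef : C = Matrix.fromBlocks (Matrix.of fun _ _ => -a)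
      (Matrix.fromCols A12 B12) (Matrix.fromRows A12.transpose B12.transpose)
      (Matrix.fromBlocks A22 0 0 B22))
    (gA gB : ℂ)
    (hgA : gA = -a - (A12 * A22⁻¹ * A12.transpose) 0 0)
    (hgB : gB = -a - (B12 * B22⁻¹ * B12.transpose) 0 0) :
    (C⁻¹) (Sum.inl 0) (Sum.inl 0) = (gA + gB + a)⁻¹ ∧
      (IsUnit A → IsUnit B → IsUnit C →
        (A⁻¹) (Sum.inl 0) (Sum.inl 0) ≠ 0 → (B⁻¹) (Sum.inl 0) (Sum.inl 0) ≠ 0 →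
        (C⁻¹) (Sum.inl 0) (Sum.inl 0) ≠ 0 →
        ((C⁻¹) (Sum.inl 0) (Sum.inl 0))⁻¹ =
          ((A⁻¹) (Sum.inl 0) (Sum.inl 0))⁻¹ + ((B⁻¹) (Sum.inl 0) (Sum.inl 0))⁻¹ + a) := by
  have hD : IsUnit (fromBlocks A22 0 0 B22) := isUnit_fromBlocks_zero₂₁.mpr ⟨hA22, hB22⟩
  have hC : C⁻¹ (.inl 0) (.inl 0) = (gA + gB + a)⁻¹ := by
    rw [hCdef, inv_fromBlocks_apply_inl_inl_of_isUnit₂₂ _ _ _ hD,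
      fromCols_mul_inv_fromBlocks_diagonal_mul_fromRows _ _ _ _ hA22 hB22, Matrix.add_apply,
      hgA, hgB]
    ring
  have hA : A⁻¹ (.inl 0) (.inl 0) = gA⁻¹ := by
    rw [hAdef, inv_fromBlocks_apply_inl_inl_of_isUnit₂₂ _ _ _ hA22, hgA]
  have hB : B⁻¹ (.inl 0) (.inl 0) = gB⁻¹ := by
    rw [hBdef, inv_fromBlocks_apply_inl_inl_of_isUnit₂₂ _ _ _ hB22, hgB]
  refine ⟨hC, fun _ _ _ _ _ _ => ?_⟩
  rw [hC, hA, hB, inv_inv, inv_inv, inv_inv]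

/-- Star product identity: joining two rooted (Hermitian) colored adjacency matrices
`A = [[-a, A₁₂],[A₁₂ᵀ, A₂₂]]` and `B = [[-a, B₁₂],[B₁₂ᵀ, B₂₂]]` at their roots gives
`C` with `(C⁻¹)₁₁ = (g_A + g_B + a)⁻¹`, i.e. `g_{G⋆H} = g_G + g_H - g_0`. -/
theorem stmt_6 (m k : ℕ) (a : ℂ)
    (A12 : Matrix (Fin 1) (Fin m) ℂ) (A22 : Matrix (Fin m) (Fin m) ℂ) (hA22 : IsUnit A22)
    (B12 : Matrix (Fin 1) (Fin k) ℂ) (B22 : Matrix (Fin k) (Fin k) ℂ) (hB22 : IsUnit B22)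
    (A : Matrix (Fin 1 ⊕ Fin m) (Fin 1 ⊕ Fin m) ℂ)
    (hAdef : A = Matrix.fromBlocks (Matrix.of fun _ _ => -a) A12 A12.transpose A22)
    (hAherm : A.IsHermitian)
    (B : Matrix (Fin 1 ⊕ Fin k) (Fin 1 ⊕ Fin k) ℂ)
    (hBdef : B = Matrix.fromBlocks (Matrix.of fun _ _ => -a) B12 B12.transpose B22)
    (hBherm : B.IsHermitian)
    (C : Matrix (Fin 1 ⊕ (Fin m ⊕ Fin k)) (Fin 1 ⊕ (Fin m ⊕ Fin k)) ℂ)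
    (hCdef : C = Matrix.fromBlocks (Matrix.of fun _ _ => -a)
      (Matrix.fromCols A12 B12) (Matrix.fromRows A12.transpose B12.transpose)
      (Matrix.fromBlocks A22 0 0 B22))
    (gA gB : ℂ)
    (hgA : gA = -a - (A12 * A22⁻¹ * A12.transpose) 0 0)
    (hgB : gB = -a - (B12 * B22⁻¹ * B12.transpose) 0 0)
    (hne : gA + gB + a ≠ 0) :
    (C⁻¹) (Sum.inl 0) (Sum.inl 0) = (gA + gB + a)⁻¹ ∧
      (IsUnit A → IsUnit B → IsUnit C →
        (A⁻¹) (Sum.inl 0) (Sum.inl 0) ≠ 0 → (B⁻¹) (Sum.inl 0) (Sum.inl 0) ≠ 0 →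
        (C⁻¹) (Sum.inl 0) (Sum.inl 0) ≠ 0 →
        ((C⁻¹) (Sum.inl 0) (Sum.inl 0))⁻¹ =
          ((A⁻¹) (Sum.inl 0) (Sum.inl 0))⁻¹ + ((B⁻¹) (Sum.inl 0) (Sum.inl 0))⁻¹ + a) :=
  stmt_6_general m k a A12 A22 hA22 B12 B22 hB22 A hAdef B hBdef C hCdef gA gB hgA hgB
end
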